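/- Let Γ be a finite-index subgroup of SL(2,ℤ). Let a be the width of Γ at the cusp ∞ (the least positive integer with T^a ∈ Γ) and b the width of Γ at the cusp 0 (the least positive integer with T'^b ∈ Γ), and let l be the Wohlfahrt level of Γ. Suppose l = N·M where N and M are relatively prime and n = lcm(a,b) divides N. Then every element B ∈ SL(2,ℤ/lℤ) whose reduction modulo N is the identity matrix lies in p_l(Γ); in other words, under the isomorphism SL(2,ℤ/lℤ) ≅ SL(2,ℤ/Nℤ) × SL(2,ℤ/Mℤ), the image p_l(Γ) contains {I} × SL(2,ℤ/Mℤ). -/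

import Mathlib

/-- `SL(2, ℤ)`. -/
abbrev SL2Z := Matrix.SpecialLinearGroup (Fin 2) ℤ

/-- The entrywise reduction homomorphism `p_m : SL(2,ℤ) → SL(2, ℤ/mℤ)`. -/
def redMap (m : ℕ) : SL2Z →* Matrix.SpecialLinearGroup (Fin 2) (ZMod m) :=
  Matrix.SpecialLinearGroup.map (Int.castRingHom (ZMod m))

/-- The Wohlfahrt level of `Γ`: the least positive integer `l` such that
`A * T ^ l * A⁻¹ ∈ Γ` for all `A ∈ SL(2,ℤ)`, where `T = [[1,1],[0,1]]`. -/
noncomputable def wohlfahrtLevel (Γ : Subgroup SL2Z) : ℕ :=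
  sInf {l : ℕ | 0 < l ∧ ∀ A : SL2Z, A * ModularGroup.T ^ l * A⁻¹ ∈ Γ}

/-- The matrix `T' = [[1,0],[1,1]]` as an element of `SL(2,ℤ)`. -/
def Tprime : SL2Z :=
  ⟨!![1, 0; 1, 1], by norm_num [Matrix.det_fin_two_of]⟩

section Aux

open Matrix ModularGroup

lemma coe_Tprime_zpow (z : ℤ) :
    ((Tprime ^ z : SL2Z) : Matrix (Fin 2) (Fin 2) ℤ) = !![1, 0; z, 1] := by
  have hTp : ((Tprime : SL2Z) : Matrix (Fin 2) (Fin 2) ℤ) = !![1, 0; 1, 1] := rfl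
  have hTpinv : ((Tprime⁻¹ : SL2Z) : Matrix (Fin 2) (Fin 2) ℤ) = !![1, 0; -1, 1] := by
    rw [Matrix.SpecialLinearGroup.coe_inv, hTp, Matrix.adjugate_fin_two]
    norm_num
  induction z using Int.induction_on with
  | zero => rw [zpow_zero, Matrix.SpecialLinearGroup.coe_one, Matrix.one_fin_two]
  | succ n h =>
    rw [_root_.zpow_add, zpow_one, Matrix.SpecialLinearGroup.coe_mul, h, hTp, Matrix.mul_fin_two]
    congrm !![?_, ?_; ?_, ?_] <;> push_cast <;> ring
  | pred n h =>
    rw [_root_.zpow_sub, zpow_one, Matrix.SpecialLinearGroup.coe_mul, h, hTpinv, Matrix.mul_fin_two]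
    congrm !![?_, ?_; ?_, ?_] <;> push_cast <;> ring

variable {m : ℕ}

/-- The elementary matrix `[[1,x],[0,1]]` in `SL(2, ZMod m)`. -/
def e12 (m : ℕ) (x : ZMod m) : Matrix.SpecialLinearGroup (Fin 2) (ZMod m) :=
  ⟨!![1, x; 0, 1], by simp [Matrix.det_fin_two_of]⟩

/-- The elementary matrix `[[1,0],[x,1]]` in `SL(2, ZMod m)`. -/
def e21 (m : ℕ) (x : ZMod m) : Matrix.SpecialLinearGroup (Fin 2) (ZMod m) :=
  ⟨!![1, 0; x, 1], by simp [Matrix.det_fin_two_of]⟩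

lemma redMap_T_zpow (m : ℕ) (z : ℤ) :
    redMap m (ModularGroup.T ^ z) = e12 m (z : ZMod m) := by
  apply Subtype.ext
  show (Int.castRingHom (ZMod m)).mapMatrix _ = _
  ext i j
  rw [ModularGroup.coe_T_zpow]
  fin_cases i <;> fin_cases j <;> simp [e12]

lemma redMap_Tprime_zpow (m : ℕ) (z : ℤ) :
    redMap m (Tprime ^ z) = e21 m (z : ZMod m) := by
  apply Subtype.ext
  show (Int.castRingHom (ZMod m)).mapMatrix _ = _
  ext i j
  rw [coe_Tprime_zpow]
  fin_cases i <;> fin_cases j <;> simp [e21]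

/-- The generating set `{T, T'}` reduced mod `m`. -/
def genSet (m : ℕ) : Set (Matrix.SpecialLinearGroup (Fin 2) (ZMod m)) :=
  {redMap m ModularGroup.T, redMap m Tprime}

lemma e12_mem (x : ZMod m) : e12 m x ∈ Subgroup.closure (genSet m) := by
  obtain ⟨z, rfl⟩ := ZMod.intCast_surjective x
  rw [← redMap_T_zpow, map_zpow]
  exact Subgroup.zpow_mem _ (Subgroup.subset_closure (Set.mem_insert _ _)) z

lemma e21_mem (x : ZMod m) : e21 m x ∈ Subgroup.closure (genSet m) := by
  obtain ⟨z, rfl⟩ := ZMod.intCast_surjective x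
  rw [← redMap_Tprime_zpow, map_zpow]
  exact Subgroup.zpow_mem _ (Subgroup.subset_closure (Set.mem_insert_of_mem _ (Set.mem_singleton _))) z

lemma e12_mul (x y : ZMod m) : e12 m x * e12 m y = e12 m (x + y) := by
  apply Subtype.ext
  show (_ : Matrix _ _ _) * _ = _
  simp only [e12, Matrix.mul_fin_two]
  congrm !![?_, ?_; ?_, ?_] <;> ring

lemma e12_inv (x : ZMod m) : (e12 m x)⁻¹ = e12 m (-x) := by
  apply inv_eq_of_mul_eq_one_right
  rw [e12_mul, add_neg_cancel]
  apply Subtype.ext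
  show (_ : Matrix _ _ _) = _
  simp [e12, Matrix.one_fin_two]

/-- The Weyl element `[[0,1],[-1,0]]`. -/
def wEl (m : ℕ) : Matrix.SpecialLinearGroup (Fin 2) (ZMod m) :=
  ⟨!![0, 1; -1, 0], by simp [Matrix.det_fin_two_of]⟩

lemma wEl_mem : wEl m ∈ Subgroup.closure (genSet m) := by
  have h : wEl m = e12 m 1 * e21 m (-1) * e12 m 1 := by
    apply Subtype.ext
    show (_ : Matrix _ _ _) = _ * _ * _
    simp only [e12, e21, wEl, Matrix.mul_fin_two]
    congrm !![?_, ?_; ?_, ?_] <;> ring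
  rw [h]
  exact Subgroup.mul_mem _ (Subgroup.mul_mem _ (e12_mem 1) (e21_mem (-1))) (e12_mem 1)

lemma coe_wEl_inv : (((wEl m)⁻¹ : Matrix.SpecialLinearGroup (Fin 2) (ZMod m)) :
    Matrix (Fin 2) (Fin 2) (ZMod m)) = !![0, -1; 1, 0] := by
  rw [Matrix.SpecialLinearGroup.coe_inv]
  show Matrix.adjugate !![0, 1; -1, 0] = _
  rw [Matrix.adjugate_fin_two]
  norm_num

/-- Diagonal matrix `[[u,0],[0,v]]` with `u*v = 1`. -/
def dEl (m : ℕ) (u v : ZMod m) (huv : u * v = 1) :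
    Matrix.SpecialLinearGroup (Fin 2) (ZMod m) :=
  ⟨!![u, 0; 0, v], by simp [Matrix.det_fin_two_of, huv]⟩

lemma dEl_mem (u v : ZMod m) (huv : u * v = 1) :
    dEl m u v huv ∈ Subgroup.closure (genSet m) := by
  have h : dEl m u v huv * wEl m = e12 m u * e21 m (-v) * e12 m u := by
    apply Subtype.ext
    show (_ : Matrix _ _ _) * _ = _ * _ * _
    simp only [e12, e21, wEl, dEl, Matrix.mul_fin_two]
    congrm !![?_, ?_; ?_, ?_]
    · linear_combination huv
    · linear_combination u * huv
    · linear_combination (0 : ZMod m) * huv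
    · linear_combination huv
  have h2 : dEl m u v huv = e12 m u * e21 m (-v) * e12 m u * (wEl m)⁻¹ :=
    eq_mul_inv_of_mul_eq h
  rw [h2]
  exact Subgroup.mul_mem _ (Subgroup.mul_mem _ (Subgroup.mul_mem _ (e12_mem u)
    (e21_mem (-v))) (e12_mem u)) (Subgroup.inv_mem _ wEl_mem)

lemma exists_q_int (a c : ℤ) (hc : c ≠ 0) : ∃ q : ℤ, (a - q * c).natAbs < c.natAbs := by
  refine ⟨a / c, ?_⟩
  have h1 : 0 ≤ a % c := Int.emod_nonneg a hc
  have h2 : a % c < |c| := Int.emod_lt_abs a hc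
  have h3 : a - a / c * c = a % c := by rw [Int.emod_def]; ring
  have h4 : |c| = (c.natAbs : ℤ) := Int.abs_eq_natAbs c
  omega

lemma exists_q (m : ℕ) (a c : ZMod m) (hc : c ≠ 0) :
    ∃ q : ZMod m, (a - q * c).val < c.val := by
  cases m with
  | zero => exact exists_q_int a c hc
  | succ m' =>
    have hc' : 0 < c.val := ZMod.val_pos.mpr hc
    refine ⟨((a.val / c.val : ℕ) : ZMod (m' + 1)), ?_⟩
    have key : a - ((a.val / c.val : ℕ) : ZMod (m' + 1)) * c
        = ((a.val % c.val : ℕ) : ZMod (m' + 1)) := by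
      have hdm : c.val * (a.val / c.val) + a.val % c.val = a.val := Nat.div_add_mod _ _
      have ha : ((a.val : ZMod (m' + 1))) = a := ZMod.natCast_zmod_val a
      have hcc : ((c.val : ZMod (m' + 1))) = c := ZMod.natCast_zmod_val c
      calc a - ((a.val / c.val : ℕ) : ZMod (m' + 1)) * c
          = ((c.val * (a.val / c.val) + a.val % c.val : ℕ) : ZMod (m' + 1))
            - ((a.val / c.val : ℕ) : ZMod (m' + 1)) * c := by rw [hdm, ha]
        _ = ((a.val % c.val : ℕ) : ZMod (m' + 1)) := by push_cast [hcc]; ring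
    rw [key, ZMod.val_cast_of_lt (lt_trans (Nat.mod_lt _ hc') (ZMod.val_lt c))]
    exact Nat.mod_lt _ hc'

/-- `SL(2, ZMod m)` is generated by the reductions of `T` and `T'`. -/
lemma mem_closure_genSet (m : ℕ) (g : Matrix.SpecialLinearGroup (Fin 2) (ZMod m)) :
    g ∈ Subgroup.closure (genSet m) := by
  suffices h : ∀ n (g : Matrix.SpecialLinearGroup (Fin 2) (ZMod m)),
      ((g : Matrix (Fin 2) (Fin 2) (ZMod m)) 1 0).val = n →
      g ∈ Subgroup.closure (genSet m) from h _ g rfl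
  intro n
  induction n using Nat.strong_induction_on with
  | _ n ih =>
    intro g hg
    set a := (g : Matrix (Fin 2) (Fin 2) (ZMod m)) 0 0 with ha
    set bb := (g : Matrix (Fin 2) (Fin 2) (ZMod m)) 0 1 with hbb
    set c := (g : Matrix (Fin 2) (Fin 2) (ZMod m)) 1 0 with hcdef
    set d := (g : Matrix (Fin 2) (Fin 2) (ZMod m)) 1 1 with hd
    have hmat : (g : Matrix (Fin 2) (Fin 2) (ZMod m)) = !![a, bb; c, d] :=
      Matrix.eta_fin_two _
    have hdet : a * d - bb * c = 1 := by
      have := g.2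
      rw [Matrix.det_fin_two] at this
      exact this
    by_cases hc : c = 0
    · -- lower triangular
      have had : a * d = 1 := by rw [hc] at hdet; linear_combination hdet
      have hgeq : g = dEl m a d had * e12 m (d * bb) := by
        apply Subtype.ext
        rw [Matrix.SpecialLinearGroup.coe_mul, hmat, hc]
        show _ = (_ : Matrix _ _ _) * _
        simp only [dEl, e12, Matrix.mul_fin_two]
        congrm !![?_, ?_; ?_, ?_]
        · ring
        · linear_combination (-bb) * had
        · ring
        · ring
      rw [hgeq]
      exact Subgroup.mul_mem _ (dEl_mem a d had) (e12_mem _)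
    · obtain ⟨q, hq⟩ := exists_q m a c hc
      set g' := (wEl m)⁻¹ * e12 m (-q) * g with hg'
      have hg'mat : (g' : Matrix (Fin 2) (Fin 2) (ZMod m))
          = !![-c, -d; a - q * c, bb - q * d] := by
        rw [hg', Matrix.SpecialLinearGroup.coe_mul, Matrix.SpecialLinearGroup.coe_mul,
          coe_wEl_inv, hmat]
        show ((!![0, -1; 1, 0] : Matrix _ _ _) * !![1, -q; 0, 1]) * !![a, bb; c, d] = _
        simp only [Matrix.mul_fin_two]
        congrm !![?_, ?_; ?_, ?_] <;> ring
      have hval : ((g' : Matrix (Fin 2) (Fin 2) (ZMod m)) 1 0).val < n := by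
        rw [hg'mat]
        simpa using hg ▸ hq
      have hmem' : g' ∈ Subgroup.closure (genSet m) := ih _ hval g' rfl
      have : g = e12 m q * wEl m * g' := by
        rw [hg', ← e12_inv]
        group
      rw [this]
      exact Subgroup.mul_mem _ (Subgroup.mul_mem _ (e12_mem q) wEl_mem) hmem'

lemma crt_inj {N M l : ℕ} (hNM : Nat.Coprime N M) (hl : l = N * M) {u v : ZMod l}
    (hdN : N ∣ l) (hdM : M ∣ l)
    (h1 : ZMod.castHom hdN (ZMod N) u = ZMod.castHom hdN (ZMod N) v)
    (h2 : ZMod.castHom hdM (ZMod M) u = ZMod.castHom hdM (ZMod M) v) : u = v := by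
  obtain ⟨z, rfl⟩ := ZMod.intCast_surjective u
  obtain ⟨w, rfl⟩ := ZMod.intCast_surjective v
  rw [map_intCast, map_intCast, ZMod.intCast_eq_intCast_iff] at h1 h2
  rw [ZMod.intCast_eq_intCast_iff]
  have hcop : IsCoprime (N : ℤ) (M : ℤ) := Int.isCoprime_iff_gcd_eq_one.mpr (by
    simpa [Int.gcd] using hNM)
  have hN : (N : ℤ) ∣ w - z := Int.ModEq.dvd h1
  have hM : (M : ℤ) ∣ w - z := Int.ModEq.dvd h2
  have hlz : (l : ℤ) ∣ w - z := by
    rw [hl]; push_cast; exact hcop.mul_dvd hN hM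
  exact Int.modEq_iff_dvd.mpr hlz

end Aux

theorem image_contains_one_cross_SL2 (Γ : Subgroup SL2Z) (hΓ : Γ.FiniteIndex)
    (a b : ℕ)
    (ha : IsLeast {k : ℕ | 0 < k ∧ ModularGroup.T ^ k ∈ Γ} a)
    (hb : IsLeast {k : ℕ | 0 < k ∧ Tprime ^ k ∈ Γ} b)
    (l N M : ℕ) (hl : l = wohlfahrtLevel Γ)
    (hlNM : l = N * M) (hNM : Nat.Coprime N M)
    (hn : Nat.lcm a b ∣ N) :
    ∀ B : Matrix.SpecialLinearGroup (Fin 2) (ZMod l),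
      Matrix.SpecialLinearGroup.map (ZMod.castHom (⟨M, hlNM⟩ : N ∣ l) (ZMod N)) B = 1 →
      B ∈ Γ.map (redMap l) := by
  intro B hB
  have hdN : N ∣ l := ⟨M, hlNM⟩
  have hdM : M ∣ l := ⟨N, hlNM.trans (Nat.mul_comm N M)⟩
  set πN := Matrix.SpecialLinearGroup.map (n := Fin 2) (ZMod.castHom hdN (ZMod N)) with hπNdef
  set πM := Matrix.SpecialLinearGroup.map (n := Fin 2) (ZMod.castHom hdM (ZMod M)) with hπMdef
  have haN : a ∣ N := (Nat.dvd_lcm_left a b).trans hn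
  have hbN : b ∣ N := (Nat.dvd_lcm_right a b).trans hn
  obtain ⟨k, hkN, hkM⟩ := Nat.chineseRemainder hNM 0 1
  have hNk : N ∣ k := Nat.modEq_zero_iff_dvd.mp hkN
  have hTk : ModularGroup.T ^ k ∈ Γ := by
    obtain ⟨c, hc⟩ := haN.trans hNk
    rw [hc, pow_mul]; exact pow_mem ha.1.2 c
  have hTpk : Tprime ^ k ∈ Γ := by
    obtain ⟨c, hc⟩ := hbN.trans hNk
    rw [hc, pow_mul]; exact pow_mem hb.1.2 c
  -- compatibility of reductions
  have hcompN : ∀ g : SL2Z, πN (redMap l g) = redMap N g := by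
    intro g
    apply Subtype.ext
    ext i j
    simp [hπNdef, redMap, Matrix.SpecialLinearGroup.map_apply_coe, RingHom.mapMatrix_apply,
      Matrix.map_apply, map_intCast]
  have hcompM : ∀ g : SL2Z, πM (redMap l g) = redMap M g := by
    intro g
    apply Subtype.ext
    ext i j
    simp [hπMdef, redMap, Matrix.SpecialLinearGroup.map_apply_coe, RingHom.mapMatrix_apply,
      Matrix.map_apply, map_intCast]
  set x := redMap l (ModularGroup.T ^ k) with hx
  set y := redMap l (Tprime ^ k) with hy
  have hxN : πN x = 1 := by
    rw [hx, hcompN, ← zpow_natCast, redMap_T_zpow]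
    apply Subtype.ext
    show (_ : Matrix _ _ _) = _
    have hk0 : ((k : ℕ) : ZMod N) = 0 := (ZMod.natCast_eq_zero_iff k N).mpr hNk
    rw [Matrix.SpecialLinearGroup.coe_one, Matrix.one_fin_two]
    simp [e12, hk0]
  have hyN : πN y = 1 := by
    rw [hy, hcompN, ← zpow_natCast, redMap_Tprime_zpow]
    apply Subtype.ext
    show (_ : Matrix _ _ _) = _
    have hk0 : ((k : ℕ) : ZMod N) = 0 := (ZMod.natCast_eq_zero_iff k N).mpr hNk
    rw [Matrix.SpecialLinearGroup.coe_one, Matrix.one_fin_two]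
    simp [e21, hk0]
  have hkM1 : ((k : ℤ) : ZMod M) = 1 := by
    rw [Int.cast_natCast]
    have := (ZMod.natCast_eq_natCast_iff k 1 M).mpr hkM
    simpa using this
  have hxM : πM x = redMap M ModularGroup.T := by
    rw [hx, hcompM, ← zpow_natCast, redMap_T_zpow, hkM1]
    have : redMap M ModularGroup.T = redMap M (ModularGroup.T ^ (1 : ℤ)) := by rw [zpow_one]
    rw [this, redMap_T_zpow]
    norm_num
  have hyM : πM y = redMap M Tprime := by
    rw [hy, hcompM, ← zpow_natCast, redMap_Tprime_zpow, hkM1]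
    have : redMap M Tprime = redMap M (Tprime ^ (1 : ℤ)) := by rw [zpow_one]
    rw [this, redMap_Tprime_zpow]
    norm_num
  -- the subgroup generated by x and y
  set H : Subgroup (Matrix.SpecialLinearGroup (Fin 2) (ZMod l)) :=
    Subgroup.closure {x, y} with hH
  have hHsub : H ≤ Γ.map (redMap l) := by
    rw [hH]
    apply (Subgroup.closure_le _).mpr
    rintro z (rfl | rfl)
    · exact ⟨ModularGroup.T ^ k, hTk, rfl⟩
    · exact ⟨Tprime ^ k, hTpk, rfl⟩
  have hHker : H ≤ πN.ker := by
    rw [hH]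
    apply (Subgroup.closure_le _).mpr
    rintro z (rfl | rfl)
    · exact hxN
    · exact hyN
  -- πM B is in the image of H under πM
  have hmapH : Subgroup.map πM H = Subgroup.closure (genSet M) := by
    rw [hH, MonoidHom.map_closure, Set.image_insert_eq, Set.image_singleton, hxM, hyM]
    rfl
  have hBM : πM B ∈ Subgroup.map πM H := by
    rw [hmapH]
    exact mem_closure_genSet M (πM B)
  obtain ⟨h, hhH, hhB⟩ := hBM
  have hhN : πN h = 1 := hHker hhH
  have hEq : h = B := by
    apply Subtype.ext
    ext i j
    apply crt_inj hNM hlNM hdN hdM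
    · have h1 : πN h = πN B := by rw [hhN, hB]
      have := congrArg
        (fun A : Matrix.SpecialLinearGroup (Fin 2) (ZMod N) =>
          (A : Matrix (Fin 2) (Fin 2) (ZMod N)) i j) h1
      simpa [hπNdef, Matrix.SpecialLinearGroup.map_apply_coe, RingHom.mapMatrix_apply,
        Matrix.map_apply] using this
    · have := congrArg
        (fun A : Matrix.SpecialLinearGroup (Fin 2) (ZMod M) =>
          (A : Matrix (Fin 2) (Fin 2) (ZMod M)) i j) hhB
      simpa [hπMdef, Matrix.SpecialLinearGroup.map_apply_coe, RingHom.mapMatrix_apply,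
        Matrix.map_apply] using this
  rw [← hEq]
  exact hHsub hhH
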